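/- Every infinite countable subshift X over a finite alphabet A contains a configuration at level 1 for ⪯, i.e., a configuration c ∈ X that is not ⪯-minimal in X but such that every y ∈ X with y ≺ c is ⪯-minimal in X. -/

import Mathlib

namespace CountableSubshift

/-- A configuration over alphabet `A` on the plane `ℤ × ℤ`. -/
abbrev Config (A : Type*) := ℤ × ℤ → A

variable {A : Type*}

/-- The shift by a vector `v`. -/
def shift (v : ℤ × ℤ) (x : Config A) : Config A := fun u => x (u + v)

/-- The shift-orbit of a configuration. -/
def orbit (x : Config A) : Set (Config A) := Set.range fun v => shift v x

variable [TopologicalSpace A]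

/-- `Preceq x y` iff `x` belongs to the closure of the shift-orbit of `y`. -/
def Preceq (x y : Config A) : Prop := x ∈ closure (orbit y)

/-- Strict version of `Preceq`. -/
def Prec (x y : Config A) : Prop := Preceq x y ∧ ¬ Preceq y x

/-- `x ≈ y` : mutual `Preceq`. -/
def OrbEquiv (x y : Config A) : Prop := Preceq x y ∧ Preceq y x

/-- A subshift: nonempty, closed and shift-invariant set of configurations. -/
def IsSubshift (X : Set (Config A)) : Prop :=
  X.Nonempty ∧ IsClosed X ∧ ∀ v : ℤ × ℤ, shift v '' X = X

/-- A configuration is periodic if it has two linearly independent vectors of periodicity. -/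
def Periodic (x : Config A) : Prop :=
  ∃ v w : ℤ × ℤ, shift v x = x ∧ shift w x = x ∧ LinearIndependent ℤ ![v, w]

/-- `x` is at level 0 in `X`: it is `Preceq`-minimal in `X`. -/
def Level0 (X : Set (Config A)) (x : Config A) : Prop :=
  x ∈ X ∧ ∀ y ∈ X, Preceq y x → Preceq x y

/-- `x` is at level 1 in `X`. -/
def Level1 (X : Set (Config A)) (x : Config A) : Prop :=
  x ∈ X ∧ ¬ Level0 X x ∧ ∀ y ∈ X, Prec y x → Level0 X y

/-- `x` is at level 2 in `X`. -/
def Level2 (X : Set (Config A)) (x : Config A) : Prop :=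
  x ∈ X ∧ ¬ Level0 X x ∧ ¬ Level1 X x ∧ ∀ y ∈ X, Prec y x → Level0 X y ∨ Level1 X y

/-- The pattern `p` with (finite) domain `D` appears in `x` at position `u`. -/
def AppearsAt (D : Finset (ℤ × ℤ)) (p : ℤ × ℤ → A) (x : Config A) (u : ℤ × ℤ) : Prop :=
  ∀ d ∈ D, x (u + d) = p d

/-- A subshift of finite type: the nonempty set of configurations avoiding a
finite family of forbidden patterns. -/
def IsSFT (X : Set (Config A)) : Prop :=
  X.Nonempty ∧ ∃ (n : ℕ) (D : Fin n → Finset (ℤ × ℤ)) (p : Fin n → ℤ × ℤ → A),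
    X = {x : Config A | ∀ (i : Fin n) (u : ℤ × ℤ), ¬ AppearsAt (D i) (p i) x u}

/-- Every pattern appearing in `c` appears at infinitely many positions. -/
def AllPatternsInfinite (c : Config A) : Prop :=
  ∀ (D : Finset (ℤ × ℤ)) (u : ℤ × ℤ),
    {u' : ℤ × ℤ | ∀ d ∈ D, c (u' + d) = c (u + d)}.Infinite

/-- The standard dot product on `ℤ × ℤ`. -/
def dot (u w : ℤ × ℤ) : ℤ := u.1 * w.1 + u.2 * w.2

set_option linter.unusedSectionVars false


lemma shift_shift (v w : ℤ × ℤ) (x : Config A) : shift v (shift w x) = shift (v + w) x := by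
  funext u; simp [shift, add_assoc]

lemma shift_zero (x : Config A) : shift 0 x = x := by funext u; simp [shift]

lemma shift_neg_shift (v : ℤ × ℤ) (x : Config A) : shift (-v) (shift v x) = x := by
  rw [shift_shift, neg_add_cancel, shift_zero]

lemma shift_shift_neg (v : ℤ × ℤ) (x : Config A) : shift v (shift (-v) x) = x := by
  rw [shift_shift, add_neg_cancel, shift_zero]

lemma mem_orbit_self (x : Config A) : x ∈ orbit x := ⟨0, shift_zero x⟩

lemma shift_mem_orbit (v : ℤ × ℤ) (x : Config A) : shift v x ∈ orbit x := ⟨v, rfl⟩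

/-- Shift invariance of a set. -/
def ShiftInv (S : Set (Config A)) : Prop := ∀ v : ℤ × ℤ, ∀ x ∈ S, shift v x ∈ S

lemma shiftInv_orbit (x : Config A) : ShiftInv (orbit x) := by
  rintro v _ ⟨w, rfl⟩
  exact ⟨v + w, (shift_shift v w x).symm⟩

lemma shift_eq_self_neg {x : Config A} {v : ℤ × ℤ} (h : shift v x = x) : shift (-v) x = x := by
  conv_lhs => rw [← h]
  exact shift_neg_shift v x

lemma shift_eq_self_add {x : Config A} {v w : ℤ × ℤ} (hv : shift v x = x) (hw : shift w x = x) :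
    shift (v + w) x = x := by
  rw [← shift_shift, hw, hv]

lemma shift_eq_self_zsmul {x : Config A} {v : ℤ × ℤ} (h : shift v x = x) (k : ℤ) :
    shift (k • v) x = x := by
  induction k using Int.induction_on with
  | zero => simpa using shift_zero x
  | succ k ih =>
      have : ((k : ℤ) + 1) • v = (k : ℤ) • v + v := by rw [add_smul, one_smul]
      rw [this]
      exact shift_eq_self_add ih h
  | pred k ih =>
      have : (-(k : ℤ) - 1) • v = (-(k : ℤ)) • v + (-v) := by
        rw [sub_smul, one_smul]; ring_nf
      rw [this]
      exact shift_eq_self_add ih (shift_eq_self_neg h)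

lemma exists_period_of_finite_orbit {x : Config A} (h : (orbit x).Finite) :
    ∃ N : ℤ, 0 < N ∧ shift (N, 0) x = x ∧ shift (0, N) x = x := by
  have hhor : ∃ p : ℤ, 0 < p ∧ shift (p, 0) x = x := by
    have hmaps : Set.MapsTo (fun n : ℤ => shift (n, 0) x) Set.univ (orbit x) :=
      fun n _ => shift_mem_orbit _ x
    obtain ⟨a, -, b, -, hab, heq⟩ := Set.infinite_univ.exists_ne_map_eq_of_mapsTo hmaps h
    have key : shift (a - b, 0) x = x := by
      have : shift (-(b, 0)) (shift (a, 0) x) = shift (-(b, 0)) (shift (b, 0) x) := by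
        rw [heq]
      rw [shift_neg_shift] at this
      rw [shift_shift] at this
      have h2 : (-(b, 0) + ((a : ℤ), (0 : ℤ))) = ((a - b : ℤ), (0 : ℤ)) := by
        simp [Prod.ext_iff]; try ring
      rwa [h2] at this
    rcases lt_trichotomy (a - b) 0 with hlt | he | hgt
    · refine ⟨b - a, by omega, ?_⟩
      have := shift_eq_self_neg key
      have h2 : (-((a - b : ℤ), (0 : ℤ))) = ((b - a : ℤ), (0 : ℤ)) := by
        simp [Prod.ext_iff]; try ring
      rwa [h2] at this
    · exact absurd (by omega : a = b) hab
    · exact ⟨a - b, hgt, key⟩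
  have hver : ∃ q : ℤ, 0 < q ∧ shift (0, q) x = x := by
    have hmaps : Set.MapsTo (fun n : ℤ => shift (0, n) x) Set.univ (orbit x) :=
      fun n _ => shift_mem_orbit _ x
    obtain ⟨a, -, b, -, hab, heq⟩ := Set.infinite_univ.exists_ne_map_eq_of_mapsTo hmaps h
    have key : shift (0, a - b) x = x := by
      have : shift (-(0, b)) (shift (0, a) x) = shift (-(0, b)) (shift (0, b) x) := by
        rw [heq]
      rw [shift_neg_shift] at this
      rw [shift_shift] at this
      have h2 : (-(0, b) + ((0 : ℤ), (a : ℤ))) = ((0 : ℤ), (a - b : ℤ)) := by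
        simp [Prod.ext_iff]; try ring
      rwa [h2] at this
    rcases lt_trichotomy (a - b) 0 with hlt | he | hgt
    · refine ⟨b - a, by omega, ?_⟩
      have := shift_eq_self_neg key
      have h2 : (-((0 : ℤ), (a - b : ℤ))) = ((0 : ℤ), (b - a : ℤ)) := by
        simp [Prod.ext_iff]; try ring
      rwa [h2] at this
    · exact absurd (by omega : a = b) hab
    · exact ⟨a - b, hgt, key⟩
  obtain ⟨p, hp, hxp⟩ := hhor
  obtain ⟨q, hq, hxq⟩ := hver
  refine ⟨p * q, mul_pos hp hq, ?_, ?_⟩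
  · have := shift_eq_self_zsmul hxp q
    have h2 : q • ((p : ℤ), (0 : ℤ)) = ((p * q : ℤ), (0 : ℤ)) := by
      simp [Prod.ext_iff]; try ring
    rwa [h2] at this
  · have := shift_eq_self_zsmul hxq p
    have h2 : p • ((0 : ℤ), (q : ℤ)) = ((0 : ℤ), (p * q : ℤ)) := by
      simp [Prod.ext_iff]; try ring
    rwa [h2] at this

/-- Two doubly-`N`-periodic configurations agreeing on the fundamental square are equal. -/
lemma eq_of_periodic_of_agree {f g : Config A} {N : ℤ} (hN : 0 < N)
    (hf1 : shift (N, 0) f = f) (hf2 : shift (0, N) f = f)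
    (hg1 : shift (N, 0) g = g) (hg2 : shift (0, N) g = g)
    (h : ∀ u : ℤ × ℤ, 0 ≤ u.1 → u.1 < N → 0 ≤ u.2 → u.2 < N → f u = g u) : f = g := by
  have key : ∀ x : Config A, shift (N, 0) x = x → shift (0, N) x = x →
      ∀ u : ℤ × ℤ, x u = x (u.1 % N, u.2 % N) := by
    intro x h1 h2 u
    have hv : shift ((-(u.1 / N)) • ((N : ℤ), (0 : ℤ)) + (-(u.2 / N)) • ((0 : ℤ), (N : ℤ))) x
        = x := shift_eq_self_add (shift_eq_self_zsmul h1 _) (shift_eq_self_zsmul h2 _)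
    conv_lhs => rw [← hv]
    show x (u + _) = _
    congr 1
    have e1 : u.1 % N = u.1 - N * (u.1 / N) := Int.emod_def u.1 N
    have e2 : u.2 % N = u.2 - N * (u.2 / N) := Int.emod_def u.2 N
    simp [Prod.ext_iff, e1, e2]
    constructor <;> ring
  funext u
  rw [key f hf1 hf2 u, key g hg1 hg2 u]
  exact h _ (Int.emod_nonneg _ hN.ne') (Int.emod_lt_of_pos _ hN)
    (Int.emod_nonneg _ hN.ne') (Int.emod_lt_of_pos _ hN)


section Part2

lemma continuous_shift (v : ℤ × ℤ) : Continuous (shift (A := A) v) :=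
  continuous_pi fun u => continuous_apply (u + v)

lemma shiftInv_closure {S : Set (Config A)} (hS : ShiftInv S) : ShiftInv (closure S) := by
  intro v x hx
  have h1 : shift v x ∈ shift v '' closure S := ⟨x, hx, rfl⟩
  have h2 : shift v '' closure S ⊆ closure (shift v '' S) :=
    image_closure_subset_closure_image (continuous_shift v)
  have h3 : shift v '' S ⊆ S := by rintro _ ⟨y, hy, rfl⟩; exact hS v y hy
  exact closure_mono h3 (h2 h1)

lemma omega_subset {S : Set (Config A)} {x : Config A} (hcl : IsClosed S) (hinv : ShiftInv S)
    (hx : x ∈ S) : closure (orbit x) ⊆ S := by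
  apply closure_minimal _ hcl
  rintro _ ⟨v, rfl⟩
  exact hinv v x hx

variable [Fintype A] [DiscreteTopology A]

lemma level0_of_finite_orbit {X : Set (Config A)} {y : Config A}
    (hy : y ∈ X) (hfin : (orbit y).Finite) : Level0 X y := by
  refine ⟨hy, fun z hz hpz => ?_⟩
  have hz' : z ∈ orbit y := by
    have := hfin.isClosed.closure_eq
    rw [Preceq, this] at hpz
    exact hpz
  obtain ⟨v, rfl⟩ := hz'
  exact subset_closure ⟨-v, shift_neg_shift v y⟩

/-- The intersection of a nonempty chain of infinite, closed, shift-invariant sets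
is infinite (and closed and shift-invariant). -/
lemma sInter_chain_infinite (c : Set (Set (Config A)))
    (hchain : IsChain (· ⊆ ·) c) (hcne : c.Nonempty)
    (hcl : ∀ Y ∈ c, IsClosed Y) (hinv : ∀ Y ∈ c, ShiftInv Y)
    (hinf : ∀ Y ∈ c, Y.Infinite) :
    (⋂₀ c).Infinite ∧ IsClosed (⋂₀ c) ∧ ShiftInv (⋂₀ c) := by
  haveI : Nonempty c := hcne.to_subtype
  have hFcl : IsClosed (⋂₀ c) := isClosed_sInter fun Y hY => hcl Y hY
  have hFinv : ShiftInv (⋂₀ c) := by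
    intro v x hx
    intro Y hY
    exact hinv Y hY v x (hx Y hY)
  refine ⟨?_, hFcl, hFinv⟩
  -- directedness of the chain
  have hdir : Directed (· ⊇ ·) (fun Y : c => (Y : Set (Config A))) := by
    intro Y Z
    rcases hchain.total Y.2 Z.2 with h | h
    · exact ⟨Y, subset_rfl, h⟩
    · exact ⟨Z, h, subset_rfl⟩
  -- nonemptiness of the intersection
  have hne : (⋂₀ c).Nonempty := by
    rw [Set.sInter_eq_iInter]
    exact IsCompact.nonempty_iInter_of_directed_nonempty_isCompact_isClosed _ hdir
      (fun Y => (hinf Y Y.2).nonempty) (fun Y => (hcl Y Y.2).isCompact) (fun Y => hcl Y Y.2)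
  by_contra hFinf
  rw [Set.not_infinite] at hFinf
  set F := ⋂₀ c with hF
  -- every element of F has finite orbit, hence is doubly periodic
  have horb : ∀ f ∈ F, (orbit f).Finite := by
    intro f hf
    apply hFinf.subset
    rintro _ ⟨v, rfl⟩
    exact hFinv v f hf
  -- a common period N for all elements of F
  classical
  obtain ⟨N, hN, hper⟩ : ∃ N : ℤ, 0 < N ∧
      ∀ f ∈ F, shift (N, 0) f = f ∧ shift (0, N) f = f := by
    set φ : Config A → ℤ := fun f =>
      if h : ∃ N : ℤ, 0 < N ∧ shift (N, 0) f = f ∧ shift (0, N) f = f then h.choose else 1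
      with hφ
    have hφpos : ∀ f, 0 < φ f := by
      intro f
      by_cases h : ∃ N : ℤ, 0 < N ∧ shift (N, 0) f = f ∧ shift (0, N) f = f
      · simp only [hφ, dif_pos h]
        exact h.choose_spec.1
      · simp only [hφ, dif_neg h]
        norm_num
    have hφper : ∀ f ∈ F, shift (φ f, 0) f = f ∧ shift (0, φ f) f = f := by
      intro f hf
      have h := exists_period_of_finite_orbit (horb f hf)
      simp only [hφ, dif_pos h]
      exact ⟨h.choose_spec.2.1, h.choose_spec.2.2⟩
    refine ⟨∏ f ∈ hFinf.toFinset, φ f, Finset.prod_pos fun f _ => hφpos f, ?_⟩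
    intro f hf
    obtain ⟨k, hk⟩ : φ f ∣ ∏ g ∈ hFinf.toFinset, φ g :=
      Finset.dvd_prod_of_mem φ (hFinf.mem_toFinset.mpr hf)
    constructor
    · have := shift_eq_self_zsmul (hφper f hf).1 k
      have h2 : k • ((φ f : ℤ), (0 : ℤ)) = ((∏ g ∈ hFinf.toFinset, φ g : ℤ), (0 : ℤ)) := by
        simp [Prod.ext_iff, hk]; ring
      rwa [h2] at this
    · have := shift_eq_self_zsmul (hφper f hf).2 k
      have h2 : k • ((0 : ℤ), (φ f : ℤ)) = ((0 : ℤ), (∏ g ∈ hFinf.toFinset, φ g : ℤ)) := by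
        simp [Prod.ext_iff, hk]; ring
      rwa [h2] at this
  -- the clopen neighbourhood U of F
  set U : Set (Config A) :=
    ⋃ f ∈ F, {x : Config A | ∀ u : ℤ × ℤ, |u.1| ≤ N → |u.2| ≤ N → x u = f u} with hU
  have hwin_fin : {u : ℤ × ℤ | |u.1| ≤ N ∧ |u.2| ≤ N}.Finite := by
    apply Set.Finite.subset ((Set.finite_Icc (-N) N).prod (Set.finite_Icc (-N) N))
    rintro ⟨a, b⟩ ⟨h1, h2⟩
    exact ⟨abs_le.mp h1, abs_le.mp h2⟩
  have hUopen : IsOpen U := by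
    apply isOpen_biUnion
    intro f _
    have : {x : Config A | ∀ u : ℤ × ℤ, |u.1| ≤ N → |u.2| ≤ N → x u = f u}
        = ⋂ u ∈ {u : ℤ × ℤ | |u.1| ≤ N ∧ |u.2| ≤ N}, {x : Config A | x u = f u} := by
      ext x
      simp only [Set.mem_setOf_eq, Set.mem_iInter]
      constructor
      · intro h u hu; exact h u hu.1 hu.2
      · intro h u h1 h2; exact h u ⟨h1, h2⟩
    rw [this]
    apply hwin_fin.isOpen_biInter
    intro u _
    have he : {x : Config A | x u = f u} = (fun x : Config A => x u) ⁻¹' {f u} := rfl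
    rw [he]
    exact (isOpen_discrete ({f u} : Set A)).preimage (continuous_apply u)
  have hFU : F ⊆ U := by
    intro f hf
    exact Set.mem_biUnion hf fun u _ _ => rfl
  -- some member of the chain is contained in U
  obtain ⟨Y₀, hY₀c, hY₀U⟩ : ∃ Y₀ ∈ c, Y₀ ⊆ U := by
    by_contra hcon
    push_neg at hcon
    have hne' : ∀ Y : c, ((Y : Set (Config A)) \ U).Nonempty := by
      intro Y
      obtain ⟨x, hx, hxU⟩ := Set.not_subset.mp (hcon Y Y.2)
      exact ⟨x, hx, hxU⟩
    have hdir' : Directed (· ⊇ ·) (fun Y : c => (Y : Set (Config A)) \ U) := by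
      intro Y Z
      obtain ⟨W, h1, h2⟩ := hdir Y Z
      exact ⟨W, Set.diff_subset_diff_left h1, Set.diff_subset_diff_left h2⟩
    have : (⋂ Y : c, ((Y : Set (Config A)) \ U)).Nonempty :=
      IsCompact.nonempty_iInter_of_directed_nonempty_isCompact_isClosed _ hdir' hne'
        (fun Y => ((hcl Y Y.2).sdiff hUopen).isCompact)
        (fun Y => (hcl Y Y.2).sdiff hUopen)
    obtain ⟨x, hx⟩ := this
    have hxF : x ∈ F := by
      rw [hF, Set.sInter_eq_iInter]
      exact Set.mem_iInter.mpr fun Y => (Set.mem_iInter.mp hx Y).1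
    exact (Set.mem_iInter.mp hx ⟨_, hcne.choose_spec⟩).2 (hFU hxF)
  -- pick a point of Y₀ outside F; derive a contradiction
  obtain ⟨z, hzY, hzF⟩ := ((hinf Y₀ hY₀c).diff hFinf).nonempty
  have hU' : ∀ v : ℤ × ℤ, ∃ f ∈ F, ∀ u : ℤ × ℤ, |u.1| ≤ N → |u.2| ≤ N → z (u + v) = f u := by
    intro v
    have : shift v z ∈ U := hY₀U (hinv Y₀ hY₀c v z hzY)
    rw [hU] at this
    obtain ⟨f, hf, hfx⟩ := Set.mem_iUnion₂.mp this
    exact ⟨f, hf, fun u h1 h2 => hfx u h1 h2⟩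
  obtain ⟨f₀, hf₀F, hf₀⟩ := hU' 0
  -- the invariance claim
  have hshift_per : ∀ (w : ℤ × ℤ), shift (N, 0) (shift w f₀) = shift w f₀ ∧
      shift (0, N) (shift w f₀) = shift w f₀ := by
    intro w
    constructor
    · rw [shift_shift, add_comm, ← shift_shift, (hper f₀ hf₀F).1]
    · rw [shift_shift, add_comm, ← shift_shift, (hper f₀ hf₀F).2]
  have step : ∀ v e : ℤ × ℤ, |e.1| ≤ 1 → |e.2| ≤ 1 →
      (∀ u : ℤ × ℤ, |u.1| ≤ N → |u.2| ≤ N → z (u + v) = f₀ (u + v)) →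
      (∀ u : ℤ × ℤ, |u.1| ≤ N → |u.2| ≤ N → z (u + (v + e)) = f₀ (u + (v + e))) := by
    intro v e he1 he2 hC
    obtain ⟨f, hfF, hf⟩ := hU' (v + e)
    have hfeq : f = shift (v + e) f₀ := by
      apply eq_of_periodic_of_agree hN (hper f hfF).1 (hper f hfF).2
        (hshift_per (v + e)).1 (hshift_per (v + e)).2
      intro u h0 h1 h2 h3
      have hu1 : |u.1| ≤ N := abs_le.mpr ⟨by omega, by omega⟩
      have hu2 : |u.2| ≤ N := abs_le.mpr ⟨by omega, by omega⟩
      have hue1 : |(u + e).1| ≤ N := by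
        have := abs_le.mp he1
        rw [Prod.fst_add]
        exact abs_le.mpr ⟨by omega, by omega⟩
      have hue2 : |(u + e).2| ≤ N := by
        have := abs_le.mp he2
        rw [Prod.snd_add]
        exact abs_le.mpr ⟨by omega, by omega⟩
      have e1 : f u = z (u + (v + e)) := (hf u hu1 hu2).symm
      have e2 : z ((u + e) + v) = f₀ ((u + e) + v) := hC (u + e) hue1 hue2
      have e3 : u + (v + e) = (u + e) + v := by ring
      have e4 : shift (v + e) f₀ u = f₀ (u + (v + e)) := rfl
      rw [e1, e3, e2, e4, ← e3]
    intro u h1 h2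
    rw [hf u h1 h2, hfeq]
    rfl
  have main : ∀ v : ℤ × ℤ, ∀ u : ℤ × ℤ, |u.1| ≤ N → |u.2| ≤ N →
      z (u + v) = f₀ (u + v) := by
    have base : ∀ u : ℤ × ℤ, |u.1| ≤ N → |u.2| ≤ N → z (u + 0) = f₀ (u + 0) := by
      intro u h1 h2
      rw [add_zero]
      have := hf₀ u h1 h2
      rwa [add_zero] at this
    have hax : ∀ a : ℤ, ∀ u : ℤ × ℤ, |u.1| ≤ N → |u.2| ≤ N →
        z (u + (a, 0)) = f₀ (u + (a, 0)) := by
      intro a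
      induction a using Int.induction_on with
      | zero => exact base
      | succ k ih =>
          have := step ((k : ℤ), 0) (1, 0) (by norm_num) (by norm_num) ih
          have he : ((k : ℤ), (0 : ℤ)) + (1, 0) = ((k + 1 : ℤ), (0 : ℤ)) := by
            simp [Prod.ext_iff]; try ring
          rwa [he] at this
      | pred k ih =>
          have := step (-(k : ℤ), 0) (-1, 0) (by norm_num) (by norm_num) ih
          have he : ((-(k : ℤ)), (0 : ℤ)) + (-1, 0) = ((-(k : ℤ) - 1), (0 : ℤ)) := by
            simp [Prod.ext_iff]; try ring
          rwa [he] at this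
    intro v
    have hb : ∀ b : ℤ, ∀ u : ℤ × ℤ, |u.1| ≤ N → |u.2| ≤ N →
        z (u + (v.1, b)) = f₀ (u + (v.1, b)) := by
      intro b
      induction b using Int.induction_on with
      | zero => exact hax v.1
      | succ k ih =>
          have := step (v.1, (k : ℤ)) (0, 1) (by norm_num) (by norm_num) ih
          have he : (v.1, (k : ℤ)) + (0, 1) = (v.1, (k + 1 : ℤ)) := by
            simp [Prod.ext_iff]; try ring
          rwa [he] at this
      | pred k ih =>
          have := step (v.1, -(k : ℤ)) (0, -1) (by norm_num) (by norm_num) ih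
          have he : (v.1, (-(k : ℤ))) + (0, -1) = (v.1, (-(k : ℤ) - 1)) := by
            simp [Prod.ext_iff]; try ring
          rwa [he] at this
    have := hb v.2
    simpa using this
  have : z = f₀ := by
    funext w
    have := main w 0 (by simpa using hN.le) (by simpa using hN.le)
    simpa using this
  exact hzF (this ▸ hf₀F)

/-- A nonempty countable closed subset of configuration space has an isolated point. -/
lemma exists_isolated {Y : Set (Config A)} (hcl : IsClosed Y) (hcnt : Y.Countable)
    (hne : Y.Nonempty) : ∃ c ∈ Y, ∃ V : Set (Config A), IsOpen V ∧ V ∩ Y = {c} := by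
  haveI := hcnt.to_subtype
  haveI : Nonempty Y := hne.to_subtype
  haveI : CompactSpace Y := isCompact_iff_compactSpace.mp hcl.isCompact
  haveI : LocallyCompactSpace Y := inferInstance
  obtain ⟨i, hi⟩ := nonempty_interior_of_iUnion_of_closed (X := Y) (ι := Y)
    (f := fun y => {y}) (fun _ => isClosed_singleton)
    (by ext y; simp)
  obtain ⟨t, ht⟩ := hi
  have hti : t ∈ ({i} : Set Y) := interior_subset ht
  rw [Set.mem_singleton_iff] at hti
  subst hti
  have hopen : IsOpen ({t} : Set Y) := by
    have : interior ({t} : Set Y) = {t} :=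
      subset_antisymm interior_subset (Set.singleton_subset_iff.mpr ht)
    rw [← this]
    exact isOpen_interior
  rw [isOpen_induced_iff] at hopen
  obtain ⟨V, hV, hVt⟩ := hopen
  refine ⟨t, t.2, V, hV, ?_⟩
  ext x
  constructor
  · rintro ⟨hxV, hxY⟩
    have : (⟨x, hxY⟩ : Y) ∈ Subtype.val ⁻¹' V := hxV
    rw [hVt] at this
    simpa using congrArg Subtype.val this
  · rintro rfl
    have : (t : Y) ∈ Subtype.val ⁻¹' V := by rw [hVt]; exact rfl
    exact ⟨this, t.2⟩

end Part2

theorem stmt3 {A : Type*} [Fintype A] [Nonempty A] [TopologicalSpace A] [DiscreteTopology A]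
    (X : Set (Config A)) (hX : IsSubshift X) (hcount : X.Countable) (hinf : X.Infinite) :
    ∃ c, Level1 X c := by
  obtain ⟨hXne, hXcl, hXim⟩ := hX
  have hXinv : ShiftInv X := by
    intro v x hx
    rw [← hXim v]
    exact ⟨x, hx, rfl⟩
  -- Zorn: a minimal infinite closed invariant subset of X
  set S := {Y : Set (Config A) | Y ⊆ X ∧ Y.Infinite ∧ IsClosed Y ∧ ShiftInv Y} with hS
  have hXS : X ∈ S := ⟨subset_rfl, hinf, hXcl, hXinv⟩
  obtain ⟨Y, hYX, hYmin⟩ := zorn_superset_nonempty S (fun c hcS hchain hcne => by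
    obtain ⟨Hinf, Hcl, Hinv⟩ := sInter_chain_infinite c hchain hcne
      (fun Y hY => (hcS hY).2.2.1) (fun Y hY => (hcS hY).2.2.2) (fun Y hY => (hcS hY).2.1)
    obtain ⟨Y₀, hY₀⟩ := hcne
    exact ⟨⋂₀ c, ⟨(Set.sInter_subset_of_mem hY₀).trans (hcS hY₀).1, Hinf, Hcl, Hinv⟩,
      fun s hs => Set.sInter_subset_of_mem hs⟩) X hXS
  obtain ⟨hYsubX, hYinf, hYcl, hYinv⟩ := hYmin.1
  have hmin : ∀ Z ∈ S, Z ⊆ Y → Z = Y := fun Z hZ hZY =>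
    subset_antisymm hZY (hYmin.2 hZ hZY)
  -- isolated point of Y
  obtain ⟨c, hcY, V, hV, hVY⟩ := exists_isolated hYcl (hcount.mono hYsubX) hYinf.nonempty
  have hcV : c ∈ V := by
    have : c ∈ ({c} : Set (Config A)) := rfl
    rw [← hVY] at this
    exact this.1
  -- the isolating neighbourhoods of the orbit points
  have hiso : ∀ v : ℤ × ℤ, (shift (-v) ⁻¹' V) ∩ Y = {shift v c} := by
    intro v
    ext x
    constructor
    · rintro ⟨hxV, hxY⟩
      have h1 : shift (-v) x ∈ V ∩ Y := ⟨hxV, hYinv (-v) x hxY⟩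
      rw [hVY] at h1
      have h2 : shift (-v) x = c := h1
      have h3 : shift v (shift (-v) x) = shift v c := by rw [h2]
      rw [shift_shift_neg] at h3
      exact h3
    · rintro rfl
      refine ⟨?_, hYinv v c hcY⟩
      show shift (-v) (shift v c) ∈ V
      rwa [shift_neg_shift]
  set W := ⋃ v : ℤ × ℤ, shift (A := A) (-v) ⁻¹' V with hW
  have hWopen : IsOpen W := isOpen_iUnion fun v => hV.preimage (continuous_shift _)
  have hWY : W ∩ Y = orbit c := by
    rw [hW, Set.iUnion_inter]
    ext x
    simp only [Set.mem_iUnion]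
    constructor
    · rintro ⟨v, hv⟩
      rw [hiso v] at hv
      exact hv ▸ shift_mem_orbit v c
    · rintro ⟨v, rfl⟩
      exact ⟨v, by rw [hiso v]; rfl⟩
  have hdiff : Y \ orbit c = Y ∩ Wᶜ := by
    rw [← hWY]
    ext x
    simp only [Set.mem_diff, Set.mem_inter_iff, Set.mem_compl_iff]
    tauto
  have hdiff_cl : IsClosed (Y \ orbit c) := by
    rw [hdiff]
    exact hYcl.inter hWopen.isClosed_compl
  have hdiff_inv : ShiftInv (Y \ orbit c) := by
    rintro v x ⟨hxY, hxO⟩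
    refine ⟨hYinv v x hxY, fun hc => hxO ?_⟩
    obtain ⟨w, hw⟩ := hc
    have hw' : shift w c = shift v x := hw
    have hkey : shift (-v + w) c = x := by
      rw [← shift_shift, hw', shift_neg_shift]
    exact hkey ▸ shift_mem_orbit _ c
  -- the orbit of c is infinite
  have horb_inf : (orbit c).Infinite := by
    by_contra hfin
    rw [Set.not_infinite] at hfin
    have hZ : Y \ orbit c ∈ S :=
      ⟨(Set.diff_subset).trans hYsubX, hYinf.diff hfin, hdiff_cl, hdiff_inv⟩
    have heq := hmin _ hZ Set.diff_subset
    have hcmem : c ∈ Y \ orbit c := by rw [heq]; exact hcY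
    exact hcmem.2 (mem_orbit_self c)
  -- the orbit closure of c is Y
  have hOm : closure (orbit c) = Y := by
    have hsub : closure (orbit c) ⊆ Y := omega_subset hYcl hYinv hcY
    exact hmin _ ⟨hsub.trans hYsubX, horb_inf.mono subset_closure, isClosed_closure,
      shiftInv_closure (shiftInv_orbit c)⟩ hsub
  -- the complement of the orbit in Y is finite and nonempty
  have hFc_fin : (Y \ orbit c).Finite := by
    by_contra hinf'
    have hinf2 : (Y \ orbit c).Infinite := hinf'
    have hZ : Y \ orbit c ∈ S := ⟨(Set.diff_subset).trans hYsubX, hinf2, hdiff_cl, hdiff_inv⟩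
    have heq := hmin _ hZ Set.diff_subset
    have hcmem : c ∈ Y \ orbit c := by rw [heq]; exact hcY
    exact hcmem.2 (mem_orbit_self c)
  have hFc_ne : (Y \ orbit c).Nonempty := by
    rcases Set.eq_empty_or_nonempty (Y \ orbit c) with he | hne
    · exfalso
      have hYW : Y ⊆ ⋃ v : ℤ × ℤ, shift (A := A) (-v) ⁻¹' V := by
        intro x hx
        by_contra hxW
        exact (Set.eq_empty_iff_forall_notMem.mp he x)
          ⟨hx, fun hO => hxW (by rw [← hWY] at hO; exact hO.1)⟩
      obtain ⟨t, ht⟩ := hYcl.isCompact.elim_finite_subcover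
        (fun v : ℤ × ℤ => shift (A := A) (-v) ⁻¹' V)
        (fun v => hV.preimage (continuous_shift _)) hYW
      have hYfin : Y.Finite := by
        apply Set.Finite.subset (Set.Finite.biUnion t.finite_toSet
          (fun v _ => Set.finite_singleton (shift v c)))
        intro x hx
        obtain ⟨v, hvt, hv⟩ := Set.mem_iUnion₂.mp (ht hx)
        exact Set.mem_biUnion hvt (by rw [← hiso v]; exact ⟨hv, hx⟩)
      exact hYinf hYfin
    · exact hne
  obtain ⟨f, hfY, hfO⟩ := hFc_ne
  refine ⟨c, hYsubX hcY, ?_, ?_⟩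
  · -- c is not at level 0
    rintro ⟨-, hL0⟩
    have hPf : Preceq f c := by
      rw [Preceq, hOm]
      exact hfY
    have hPc : Preceq c f := hL0 f (hYsubX hfY) hPf
    have hsub : closure (orbit f) ⊆ Y \ orbit c :=
      omega_subset hdiff_cl hdiff_inv ⟨hfY, hfO⟩
    exact (hsub hPc).2 (mem_orbit_self c)
  · -- everything strictly below c is at level 0
    rintro y hyX ⟨hyc, hcy⟩
    have hyY : y ∈ Y := by rw [← hOm]; exact hyc
    have hfiny : (orbit y).Finite := by
      by_contra hinfy
      have hinfy2 : (orbit y).Infinite := hinfy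
      have hsub : closure (orbit y) ⊆ Y := omega_subset hYcl hYinv hyY
      have hZ : closure (orbit y) ∈ S := ⟨hsub.trans hYsubX, hinfy2.mono subset_closure,
        isClosed_closure, shiftInv_closure (shiftInv_orbit y)⟩
      have heq := hmin _ hZ hsub
      exact hcy (by rw [Preceq, heq]; exact hcY)
    exact level0_of_finite_orbit hyX hfiny

end CountableSubshift
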